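/- arXiv:2109.00646 — 2 statements merged into one kernel-verified Lean document; each statement's English description precedes it below -/
import Mathlib

section
/- Let a point X be uniformly distributed on a disk of radius r_d centered at (0,0,h) in the plane z = h, with h > 0, and let the reference point be v₀ = (v₀, 0, 0) with 0 ≤ v₀ ≤ r_d. Then the distance Z = ‖X − v₀‖ has probability density f_Z(z) = 2z/r_d² for z_l ≤ z ≤ z_m and f_Z(z) = (2z/(π r_d²)) arccos((z² + v₀² − r_d² − h²)/(2 v₀ √(z² − h²))) for z_m ≤ z ≤ z_p, where z_l = h, z_m = √((r_d − v₀)² + h²), and z_p = √((r_d + v₀)² + h²). -/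
/-!
In polar coordinates `(s, θ)` centred at the reference point `v₀ = (v₀, 0)`, the uniform measure
on the disk of radius `r` has density `s · A(s) / (π r²)`, where `A(s)` is the angular measure of
the part of the circle of radius `s` about `v₀` inside the disk. By the law of cosines that circle
point lies in the disk iff `cos θ ≤ (r² - s² - v₀²) / (2 v₀ s)`, so `A(s) = 2π` for `s ≤ r - v₀`,
`A(s) = 2 arccos ((s² + v₀² - r²) / (2 v₀ s))` for `r - v₀ < s ≤ r + v₀`, and `A(s) = 0` beyond.
The distance to the elevated disk is `z = √(s² + h²)`, and `s ds = z dz` turns `s · A(s) ds`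
into `z · A(√(z² - h²)) dz`.
-/

open MeasureTheory Real Set
open scoped ENNReal

theorem volume_Ioo_setOf_cos_le (c : ℝ) :
    volume {θ ∈ Ioo (-π) π | cos θ ≤ c} = ENNReal.ofReal (2 * arccos (-c)) := by
  have hset : {θ ∈ Ioo (-π) π | cos θ ≤ c} = Ioo (-π) π \ Ioo (-arccos c) (arccos c) := by
    ext θ
    simp only [mem_ofPred_eq, mem_sdiff, and_congr_right_iff]
    intro hθ
    rw [mem_Ioo, ← abs_lt, ← cos_abs, not_lt]
    have hθπ : |θ| < π := abs_lt.2 hθ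
    have harccos : arccos (cos |θ|) = |θ| := arccos_cos (abs_nonneg θ) hθπ.le
    refine ⟨fun h => harccos ▸ arccos_le_arccos h, fun h => ?_⟩
    by_contra! hc
    rcases lt_or_ge c (-1) with hc1 | hc1
    · exact (arccos_of_le_neg_one hc1.le ▸ h).not_gt hθπ
    · exact h.not_gt (harccos ▸ arccos_lt_arccos hc1 hc (cos_le_one _))
  have hsub : Ioo (-arccos c) (arccos c) ⊆ Ioo (-π) π :=
    Ioo_subset_Ioo (neg_le_neg (arccos_le_pi c)) (arccos_le_pi c)
  rw [hset, measure_sdiff hsub measurableSet_Ioo.nullMeasurableSet measure_Ioo_lt_top.ne,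
    volume_Ioo, volume_Ioo, ← ENNReal.ofReal_sub _ (by linarith [arccos_nonneg c]), arccos_neg]
  ring_nf

theorem lintegral_eq_lintegral_polar (c : EuclideanSpace ℝ (Fin 2))
    {F : EuclideanSpace ℝ (Fin 2) → ℝ≥0∞} (hF : Measurable F) :
    ∫⁻ p, F p = ∫⁻ s in Ioi 0, ∫⁻ θ in Ioo (-π) π,
      ENNReal.ofReal s * F (c + WithLp.toLp 2 ![s * cos θ, s * sin θ]) := by
  let e : EuclideanSpace ℝ (Fin 2) ≃ᵐ ℝ × ℝ :=
    (MeasurableEquiv.toLp 2 (Fin 2 → ℝ)).symm.trans MeasurableEquiv.finTwoArrow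
  have he : MeasurePreserving e volume volume :=
    (volume_preserving_finTwoArrow ℝ).comp
      (EuclideanSpace.volume_preserving_symm_measurableEquiv_toLp (Fin 2))
  have hmeas : Measurable fun q : ℝ × ℝ =>
      ENNReal.ofReal q.1 * F (c + e.symm (polarCoord.symm q)) := by
    fun_prop
  calc ∫⁻ p, F p = ∫⁻ p, F (c + p) := (lintegral_add_left_eq_self F c).symm
    _ = ∫⁻ q, F (c + e.symm q) :=
      (he.symm.lintegral_comp_emb e.symm.measurableEmbedding (fun p => F (c + p))).symm
    _ = ∫⁻ q in polarCoord.target, ENNReal.ofReal q.1 * F (c + e.symm (polarCoord.symm q)) :=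
      (lintegral_comp_polarCoord_symm _).symm
    _ = _ := by
      rw [polarCoord_target, Measure.volume_eq_prod, setLIntegral_prod _ hmeas.aemeasurable]
      rfl

noncomputable def arcMeasure (c : EuclideanSpace ℝ (Fin 2)) (B : Set (EuclideanSpace ℝ (Fin 2)))
    (s : ℝ) : ℝ≥0∞ :=
  volume {θ ∈ Ioo (-π) π | c + WithLp.toLp 2 ![s * cos θ, s * sin θ] ∈ B}

theorem dist_add_polar_self (c : EuclideanSpace ℝ (Fin 2)) {s : ℝ} (hs : 0 ≤ s) (θ : ℝ) :
    dist (c + WithLp.toLp 2 ![s * cos θ, s * sin θ]) c = s := by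
  rw [dist_self_add_left, EuclideanSpace.norm_eq, Fin.sum_univ_two]
  simp only [Matrix.cons_val_zero, Matrix.cons_val_one, norm_mul, Real.norm_eq_abs, mul_pow,
    sq_abs]
  rw [← mul_add, cos_sq_add_sin_sq, mul_one, sqrt_sq hs]

theorem map_dist_restrict_eq_withDensity (c : EuclideanSpace ℝ (Fin 2))
    {B : Set (EuclideanSpace ℝ (Fin 2))} (hB : MeasurableSet B) :
    (volume.restrict B).map (fun p => dist p c) =
      volume.withDensity ((Ioi 0).indicator fun s => ENNReal.ofReal s * arcMeasure c B s) := by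
  have hd : Measurable fun p : EuclideanSpace ℝ (Fin 2) => dist p c := by fun_prop
  ext S hS
  rw [withDensity_apply _ hS, setLIntegral_indicator measurableSet_Ioi, Measure.map_apply hd hS,
    Measure.restrict_apply (hd hS), ← lintegral_indicator_one ((hd hS).inter hB),
    lintegral_eq_lintegral_polar c (measurable_one.indicator ((hd hS).inter hB)),
    inter_comm (Ioi 0), ← setLIntegral_indicator hS]
  refine setLIntegral_congr_fun measurableSet_Ioi fun s (hs : 0 < s) => ?_
  have hcond : MeasurableSet {θ | c + WithLp.toLp 2 ![s * cos θ, s * sin θ] ∈ B} :=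
    hB.preimage (by fun_prop)
  by_cases hsS : s ∈ S
  · have hind : ∀ θ, ((fun p => dist p c) ⁻¹' S ∩ B).indicator 1
        (c + WithLp.toLp 2 ![s * cos θ, s * sin θ]) =
        {θ | c + WithLp.toLp 2 ![s * cos θ, s * sin θ] ∈ B}.indicator (1 : ℝ → ℝ≥0∞) θ := by
      intro θ
      by_cases hθ : c + WithLp.toLp 2 ![s * cos θ, s * sin θ] ∈ B <;>
        simp [hθ, hsS, dist_add_polar_self c hs.le]
    simp_rw [hind, indicator_of_mem hsS]
    rw [lintegral_const_mul _ (measurable_one.indicator hcond), lintegral_indicator_one hcond,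
      Measure.restrict_apply hcond, arcMeasure, inter_comm]
    rfl
  · simp [dist_add_polar_self c hs.le, hsS]

theorem strictMonoOn_sqrt_sq_add_sq (h : ℝ) :
    StrictMonoOn (fun s => √(s ^ 2 + h ^ 2)) (Ici 0) :=
  fun _ ha _ _ hab => sqrt_lt_sqrt (by positivity) (by gcongr)

theorem sqrt_sq_add_sq_sub_sq {s : ℝ} (hs : 0 ≤ s) (h : ℝ) :
    √(√(s ^ 2 + h ^ 2) ^ 2 - h ^ 2) = s := by
  rw [sq_sqrt (by positivity), add_sub_cancel_right, sqrt_sq hs]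

theorem image_sqrt_sq_add_sq_Ioi {h : ℝ} (hh : 0 ≤ h) :
    (fun s => √(s ^ 2 + h ^ 2)) '' Ioi 0 = Ioi h := by
  ext z
  constructor
  · rintro ⟨s, hs, rfl⟩
    simpa [sqrt_sq hh] using
      strictMonoOn_sqrt_sq_add_sq h self_mem_Ici (mem_Ici.2 (le_of_lt hs)) hs
  · intro hz
    have hz2 : 0 < z ^ 2 - h ^ 2 := by nlinarith [mem_Ioi.1 hz]
    refine ⟨√(z ^ 2 - h ^ 2), sqrt_pos.2 hz2, ?_⟩
    simp only [sq_sqrt hz2.le, sub_add_cancel, sqrt_sq (hh.trans (le_of_lt hz))]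

theorem map_sqrt_sq_add_sq_withDensity {h : ℝ} (hh : 0 ≤ h) (F : ℝ → ℝ≥0∞) :
    (volume.withDensity ((Ioi 0).indicator fun s => ENNReal.ofReal s * F s)).map
        (fun s => √(s ^ 2 + h ^ 2)) =
      volume.withDensity ((Ioi h).indicator fun z => ENNReal.ofReal z * F √(z ^ 2 - h ^ 2)) := by
  set q : ℝ → ℝ := fun s => √(s ^ 2 + h ^ 2)
  have hq : Measurable q := by fun_prop
  have hderiv : ∀ s ∈ Ioi (0 : ℝ), HasDerivWithinAt q (s / q s) (Ioi 0) s := by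
    intro s (hs : 0 < s)
    have hpos : 0 < s ^ 2 + h ^ 2 := by positivity
    refine ((((hasDerivAt_pow 2 s).add_const (h ^ 2)).sqrt hpos.ne').congr_deriv ?_)
      |>.hasDerivWithinAt
    simp only [q]
    field_simp
    norm_num
  ext S hS
  rw [Measure.map_apply hq hS, withDensity_apply _ (hq hS), withDensity_apply _ hS,
    setLIntegral_indicator measurableSet_Ioi, setLIntegral_indicator measurableSet_Ioi,
    inter_comm (Ioi 0), inter_comm (Ioi h), ← image_sqrt_sq_add_sq_Ioi hh, ← image_preimage_inter,
    lintegral_image_eq_lintegral_abs_deriv_mul ((hq hS).inter measurableSet_Ioi)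
      (fun s hs => (hderiv s hs.2).mono inter_subset_right)
      ((strictMonoOn_sqrt_sq_add_sq h).injOn.mono fun s hs => mem_Ici.2 (le_of_lt hs.2))]
  refine setLIntegral_congr_fun ((hq hS).inter measurableSet_Ioi) fun s hs => ?_
  have hqs : 0 < q s := sqrt_pos.2 (by have := hs.2.out; positivity)
  rw [sqrt_sq_add_sq_sub_sq (le_of_lt hs.2), ← mul_assoc, ← ENNReal.ofReal_mul (abs_nonneg _),
    abs_of_nonneg (div_nonneg (le_of_lt hs.2) hqs.le), div_mul_cancel₀ _ hqs.ne']

theorem norm_single_add_polar_sq (v₀ s θ : ℝ) :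
    ‖EuclideanSpace.single 0 v₀ + WithLp.toLp 2 ![s * cos θ, s * sin θ]‖ ^ 2 =
      s ^ 2 + 2 * v₀ * s * cos θ + v₀ ^ 2 := by
  rw [EuclideanSpace.norm_sq_eq, Fin.sum_univ_two]
  simp only [PiLp.add_apply, PiLp.single_eq_same, ne_eq, one_ne_zero, not_false_eq_true,
    PiLp.single_eq_of_ne, Matrix.cons_val_zero, Matrix.cons_val_one, Matrix.cons_val_fin_one,
    zero_add, norm_eq_abs, sq_abs]
  linear_combination s ^ 2 * sin_sq_add_cos_sq θ

theorem arcMeasure_closedBall {r : ℝ} (hr : 0 ≤ r) (v₀ s : ℝ) :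
    arcMeasure (EuclideanSpace.single 0 v₀) (Metric.closedBall 0 r) s =
      volume {θ ∈ Ioo (-π) π | s ^ 2 + 2 * v₀ * s * cos θ + v₀ ^ 2 ≤ r ^ 2} := by
  simp only [arcMeasure, mem_closedBall_zero_iff, ← norm_single_add_polar_sq,
    sq_le_sq₀ (norm_nonneg _) hr]

theorem arcMeasure_closedBall_of_add_le {r v₀ s : ℝ} (hv₀ : 0 ≤ v₀) (hs : 0 ≤ s)
    (h : s + v₀ ≤ r) :
    arcMeasure (EuclideanSpace.single 0 v₀) (Metric.closedBall 0 r) s =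
      ENNReal.ofReal (2 * π) := by
  have hall : ∀ θ, s ^ 2 + 2 * v₀ * s * cos θ + v₀ ^ 2 ≤ r ^ 2 := fun θ => by
    nlinarith [cos_le_one θ, mul_nonneg hv₀ hs]
  rw [arcMeasure_closedBall (by linarith), sep_eq_self_iff_mem_true.2 fun θ _ => hall θ,
    volume_Ioo]
  ring_nf

theorem arcMeasure_closedBall_of_add_lt {r v₀ s : ℝ} (hr : 0 ≤ r) (hv₀ : 0 ≤ v₀)
    (h : r + v₀ < s) :
    arcMeasure (EuclideanSpace.single 0 v₀) (Metric.closedBall 0 r) s = 0 := by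
  have hnone : ∀ θ, ¬ s ^ 2 + 2 * v₀ * s * cos θ + v₀ ^ 2 ≤ r ^ 2 := fun θ => by
    nlinarith [neg_one_le_cos θ, mul_nonneg hv₀ (hr.trans (by linarith : r ≤ s))]
  rw [arcMeasure_closedBall hr, sep_eq_empty_iff_mem_false.2 fun θ _ => hnone θ, measure_empty]

theorem arcMeasure_closedBall_eq_arccos {r v₀ s : ℝ} (hr : 0 ≤ r) (hv₀ : 0 < v₀) (hs : 0 < s) :
    arcMeasure (EuclideanSpace.single 0 v₀) (Metric.closedBall 0 r) s =
      ENNReal.ofReal (2 * arccos ((s ^ 2 + v₀ ^ 2 - r ^ 2) / (2 * v₀ * s))) := by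
  have hcos : ∀ θ, s ^ 2 + 2 * v₀ * s * cos θ + v₀ ^ 2 ≤ r ^ 2 ↔
      cos θ ≤ (r ^ 2 - s ^ 2 - v₀ ^ 2) / (2 * v₀ * s) := fun θ => by
    rw [le_div_iff₀ (by positivity)]
    constructor <;> intro <;> linarith
  simp only [arcMeasure_closedBall hr, hcos, volume_Ioo_setOf_cos_le]
  congr 3
  ring

noncomputable def distanceDensity (r v₀ h z : ℝ) : ℝ :=
  if h ≤ z ∧ z ≤ √((r - v₀) ^ 2 + h ^ 2) then 2 * z / r ^ 2
  else if √((r - v₀) ^ 2 + h ^ 2) ≤ z ∧ z ≤ √((r + v₀) ^ 2 + h ^ 2) then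
    2 * z / (π * r ^ 2) * arccos ((z ^ 2 + v₀ ^ 2 - r ^ 2 - h ^ 2) / (2 * v₀ * √(z ^ 2 - h ^ 2)))
  else 0

theorem distanceDensity_of_lt {r v₀ h z : ℝ} (hz : z < h) : distanceDensity r v₀ h z = 0 := by
  have hle : h ≤ √((r - v₀) ^ 2 + h ^ 2) :=
    (le_abs_self h).trans ((sqrt_sq_eq_abs h).symm.trans_le (sqrt_le_sqrt (by nlinarith)))
  rw [distanceDensity, if_neg fun hc => hz.not_ge hc.1,
    if_neg fun hc => (hle.trans hc.1).not_gt hz]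

theorem ofReal_distanceDensity_sqrt_sq_add_sq {r v₀ h s : ℝ} (hr : 0 < r) (hv₀ : v₀ ∈ Icc 0 r)
    (hh : 0 ≤ h) (hs : 0 < s) :
    ENNReal.ofReal (distanceDensity r v₀ h √(s ^ 2 + h ^ 2)) =
      (ENNReal.ofReal (π * r ^ 2))⁻¹ * (ENNReal.ofReal √(s ^ 2 + h ^ 2) *
        arcMeasure (EuclideanSpace.single 0 v₀) (Metric.closedBall 0 r) s) := by
  obtain ⟨hv₀0, hv₀r⟩ := hv₀
  set q : ℝ → ℝ := fun s => √(s ^ 2 + h ^ 2)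
  have hq := strictMonoOn_sqrt_sq_add_sq h
  have hhq : h ≤ q s := by
    simpa [q, sqrt_sq hh] using hq.monotoneOn self_mem_Ici (mem_Ici.2 hs.le) hs.le
  have hqs : 0 < q s := sqrt_pos.2 (by positivity)
  have hconv : ∀ A, (ENNReal.ofReal (π * r ^ 2))⁻¹ * (ENNReal.ofReal (q s) * ENNReal.ofReal A) =
      ENNReal.ofReal (q s * A / (π * r ^ 2)) := fun A => by
    rw [← ENNReal.ofReal_mul hqs.le, ← ENNReal.ofReal_inv_of_pos (by positivity),
      ← ENNReal.ofReal_mul (by positivity), div_eq_inv_mul]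
  have hqs2 : q s ^ 2 - h ^ 2 = s ^ 2 := by rw [sq_sqrt (by positivity)]; ring
  rcases le_or_gt s (r - v₀) with hs_m | hm_s
  · have hqm : q s ≤ q (r - v₀) :=
      hq.monotoneOn (mem_Ici.2 hs.le) (mem_Ici.2 (by linarith)) hs_m
    rw [distanceDensity, if_pos ⟨hhq, hqm⟩,
      arcMeasure_closedBall_of_add_le hv₀0 hs.le (by linarith), hconv]
    congr 1
    field_simp
    ring
  rcases le_or_gt s (r + v₀) with hs_p | hp_s
  · have hv₀pos : 0 < v₀ := by linarith
    have hmq : q (r - v₀) < q s := hq (mem_Ici.2 (by linarith)) (mem_Ici.2 hs.le) hm_s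
    have hqp : q s ≤ q (r + v₀) :=
      hq.monotoneOn (mem_Ici.2 hs.le) (mem_Ici.2 (by linarith)) hs_p
    rw [distanceDensity, if_neg fun hc => hc.2.not_gt hmq, if_pos ⟨hmq.le, hqp⟩,
      arcMeasure_closedBall_eq_arccos hr.le hv₀pos hs, hconv, hqs2, sqrt_sq hs.le,
      show q s ^ 2 + v₀ ^ 2 - r ^ 2 - h ^ 2 = s ^ 2 + v₀ ^ 2 - r ^ 2 by linarith]
    congr 1
    ring
  · have hpq : q (r + v₀) < q s := hq (mem_Ici.2 (by linarith)) (mem_Ici.2 hs.le) hp_s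
    have hmq : q (r - v₀) < q s :=
      (hq.monotoneOn (mem_Ici.2 (by linarith)) (mem_Ici.2 (by linarith)) (by linarith)).trans_lt
        hpq
    rw [distanceDensity, if_neg fun hc => hc.2.not_gt hmq, if_neg fun hc => hc.2.not_gt hpq,
      arcMeasure_closedBall_of_add_lt hr.le hv₀0 hp_s, mul_zero, mul_zero, ENNReal.ofReal_zero]

/-- Distance distribution from a reference point at horizontal offset `v₀` (and height `0`)
to a point uniformly distributed on a disk of radius `r_d` elevated at height `h > 0`:
the distance `Z = √(‖X₂D − v₀‖² + h²)` (where `X₂D` is the uniform 2D projection) has density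
`f_Z(z) = 2z/r_d²` on `[z_l, z_m]` and
`f_Z(z) = (2z/(π r_d²)) arccos((z² + v₀² − r_d² − h²)/(2 v₀ √(z² − h²)))` on `[z_m, z_p]`,
where `z_l = h`, `z_m = √((r_d − v₀)² + h²)`, `z_p = √((r_d + v₀)² + h²)`. -/
theorem distance_density_uniform_disk (r_d v₀ h : ℝ) (hrd : 0 < r_d) (hh : 0 < h)
    (hv₀ : v₀ ∈ Icc 0 r_d)
    (z_l z_m z_p : ℝ)
    (hzl : z_l = h)
    (hzm : z_m = Real.sqrt ((r_d - v₀) ^ 2 + h ^ 2))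
    (hzp : z_p = Real.sqrt ((r_d + v₀) ^ 2 + h ^ 2))
    (fZ : ℝ → ℝ)
    (hfZ : ∀ z, fZ z =
      if z_l ≤ z ∧ z ≤ z_m then 2 * z / r_d ^ 2
      else if z_m ≤ z ∧ z ≤ z_p then
        2 * z / (Real.pi * r_d ^ 2) *
          Real.arccos ((z ^ 2 + v₀ ^ 2 - r_d ^ 2 - h ^ 2) /
            (2 * v₀ * Real.sqrt (z ^ 2 - h ^ 2)))
      else 0)
    (μ : Measure (EuclideanSpace ℝ (Fin 2)))
    (hμ : μ = (volume (Metric.closedBall (0 : EuclideanSpace ℝ (Fin 2)) r_d))⁻¹ •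
      volume.restrict (Metric.closedBall (0 : EuclideanSpace ℝ (Fin 2)) r_d)) :
    Measure.map
        (fun p : EuclideanSpace ℝ (Fin 2) =>
          Real.sqrt (dist p (WithLp.toLp 2 (fun i : Fin 2 => if i = 0 then v₀ else 0)) ^ 2 + h ^ 2)) μ =
      volume.withDensity (fun z => ENNReal.ofReal (fZ z)) := by
  have hfZ' : fZ = distanceDensity r_d v₀ h := by
    subst hzl hzm hzp
    exact funext hfZ
  have hc : (WithLp.toLp 2 fun i : Fin 2 => if i = 0 then v₀ else 0) =
      EuclideanSpace.single 0 v₀ := by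
    ext i
    fin_cases i <;> simp
  have hvol : volume (Metric.closedBall (0 : EuclideanSpace ℝ (Fin 2)) r_d) =
      ENNReal.ofReal (π * r_d ^ 2) := by
    rw [EuclideanSpace.volume_closedBall_fin_two, ← ENNReal.ofReal_pow hrd.le,
      ← ENNReal.ofReal_mul (by positivity), mul_comm]
  rw [hμ, hc, Measure.map_smul,
    show (fun p : EuclideanSpace ℝ (Fin 2) => √(dist p (EuclideanSpace.single 0 v₀) ^ 2 + h ^ 2)) =
      (fun s => √(s ^ 2 + h ^ 2)) ∘ fun p => dist p (EuclideanSpace.single 0 v₀) from rfl,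
    ← Measure.map_map (by fun_prop) (by fun_prop),
    map_dist_restrict_eq_withDensity _ Metric.isClosed_closedBall.measurableSet,
    map_sqrt_sq_add_sq_withDensity hh.le, hvol,
    ← withDensity_smul' _ _ (ENNReal.inv_ne_top.2 (by positivity))]
  refine withDensity_congr_ae ?_
  filter_upwards [Measure.ae_ne volume h] with z hz
  rcases hz.lt_or_gt with hzh | hzh
  · rw [Pi.smul_apply, indicator_of_notMem (notMem_Ioi.2 hzh.le), hfZ',
      distanceDensity_of_lt hzh, smul_zero, ENNReal.ofReal_zero]
  · obtain ⟨s, hs, rfl⟩ : z ∈ (fun s => √(s ^ 2 + h ^ 2)) '' Ioi 0 := by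
      rwa [image_sqrt_sq_add_sq_Ioi hh.le]
    rw [Pi.smul_apply, indicator_of_mem (mem_Ioi.2 hzh), sqrt_sq_add_sq_sub_sq hs.le, smul_eq_mul,
      hfZ', ofReal_distanceDensity_sqrt_sq_add_sq hrd hv₀ hh.le hs]
end

section
/- Let k_a > 0, α_L, α_N > 0, and r > 0. Then d = (α_N/k_a) · W((k_a/α_N) e^{(k_a/α_N) r} r^{α_L/α_N}), where W is the principal branch of the Lambert W function, is the unique positive solution of the equation e^{-k_a r} r^{-α_L} = e^{-k_a d} d^{-α_N}. -/
open Real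

/-- With `W` the principal branch of the Lambert W function (the inverse of `w ↦ w e^w`
on `[0, ∞)`), `d = (α_N/k_a) W((k_a/α_N) e^{(k_a/α_N) r} r^{α_L/α_N})` is the unique positive
solution of `e^{-k_a r} r^{-α_L} = e^{-k_a d} d^{-α_N}`. -/
theorem nlos_exclusion_radius_lambertW (k_a α_L α_N r : ℝ)
    (hka : 0 < k_a) (hαL : 0 < α_L) (hαN : 0 < α_N) (hr : 0 < r)
    (W : ℝ → ℝ)
    (hW : ∀ y : ℝ, 0 ≤ y → 0 ≤ W y ∧ W y * Real.exp (W y) = y)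
    (d : ℝ)
    (hd : d = α_N / k_a * W (k_a / α_N * Real.exp (k_a / α_N * r) * r ^ (α_L / α_N))) :
    0 < d ∧
    Real.exp (-k_a * r) * r ^ (-α_L) = Real.exp (-k_a * d) * d ^ (-α_N) ∧
    ∀ d' : ℝ, 0 < d' →
      Real.exp (-k_a * r) * r ^ (-α_L) = Real.exp (-k_a * d') * d' ^ (-α_N) → d' = d := by
  set c : ℝ := k_a / α_N with hc
  have hcpos : 0 < c := div_pos hka hαN
  set y : ℝ := c * Real.exp (c * r) * r ^ (α_L / α_N) with hy
  have hrp : (0:ℝ) < r ^ (α_L / α_N) := Real.rpow_pos_of_pos hr _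
  have hypos : 0 < y := by positivity
  obtain ⟨hW0, hWeq⟩ := hW y hypos.le
  have hWpos : 0 < W y := by
    rcases hW0.lt_or_eq with h | h
    · exact h
    · exfalso; rw [← h] at hWeq; simp at hWeq; nlinarith
  have hcd : c * d = W y := by
    rw [hd, hc]; field_simp
  have hdpos : 0 < d := by
    by_contra h
    push_neg at h
    nlinarith [hWpos, hcd, mul_nonneg hcpos.le (neg_nonneg.mpr h)]
  -- key log identity
  have hde : c * d * Real.exp (c * d) = y := by rw [hcd]; exact hWeq
  have hlog : Real.log d + c * d = c * r + (α_L / α_N) * Real.log r := by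
    have h1 : d * Real.exp (c * d) = Real.exp (c * r) * r ^ (α_L / α_N) := by
      have : c * (d * Real.exp (c * d)) = c * (Real.exp (c * r) * r ^ (α_L / α_N)) := by
        rw [← mul_assoc]; rw [hde, hy]; ring
      exact mul_left_cancel₀ hcpos.ne' this
    have h2 := congrArg Real.log h1
    rw [Real.log_mul hdpos.ne' (Real.exp_pos _).ne', Real.log_exp,
        Real.log_mul (Real.exp_pos _).ne' hrp.ne', Real.log_exp,
        Real.log_rpow hr] at h2
    linarith
  have hkey : α_N * Real.log d + k_a * d = k_a * r + α_L * Real.log r := by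
    have := congrArg (fun t => α_N * t) hlog
    simp only [mul_add] at this
    have hca : α_N * (c * d) = k_a * d := by rw [hc]; field_simp; try ring
    have hcr : α_N * (c * r) = k_a * r := by rw [hc]; field_simp; try ring
    have hal : α_N * (α_L / α_N * Real.log r) = α_L * Real.log r := by
      field_simp
    linarith [this, hca, hcr, hal]
  have hrw : ∀ x β : ℝ, 0 < x → Real.exp (-k_a * x) * x ^ (-β) =
      Real.exp (-k_a * x - β * Real.log x) := by
    intro x β hx
    rw [Real.rpow_def_of_pos hx, ← Real.exp_add]
    ring_nf
  refine ⟨hdpos, ?_, ?_⟩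
  · rw [hrw r α_L hr, hrw d α_N hdpos]
    congr 1
    linarith
  · intro d' hd' hE
    rw [hrw r α_L hr, hrw d' α_N hd'] at hE
    have h3 := Real.exp_injective hE
    have h4 : k_a * d' + α_N * Real.log d' = k_a * d + α_N * Real.log d := by linarith
    rcases lt_trichotomy d' d with h | h | h
    · have := Real.log_lt_log hd' h
      nlinarith
    · exact h
    · have := Real.log_lt_log hdpos h
      nlinarith
end
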